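/- Let λ be a Young diagram with n = |λ| boxes and let u, v be arbitrary complex numbers. Then ∑_{Λ : λ ↗ Λ} (c(b) + u)(c(b) + v) · dim Λ = (n + uv)(n + 1) · dim λ, where the sum runs over all Young diagrams Λ obtained from λ by adding one box b = Λ∖λ, and c(b) = j − i is the content of the added box. Equivalently, the numbers p_{u,v}(λ,Λ) = (c(b)+u)(c(b)+v) dim Λ / ((n+uv)(n+1) dim λ) sum to 1 over Λ with λ ↗ Λ. -/

import Mathlib

/-- `ν` is obtained from `μ` by adding a single box (`μ ↗ ν`). -/
def YDCovers (μ ν : YoungDiagram) : Prop :=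
  ∃ c ∉ μ.cells, ν.cells = insert c μ.cells

/-- `dim λ`: the number of standard Young tableaux of shape `λ`, i.e. the number of
chains `∅ = λ⁰ ↗ λ¹ ↗ ⋯ ↗ λⁿ = λ` in the Young lattice. -/
noncomputable def dimYD (μ : YoungDiagram) : ℕ :=
  Nat.card {L : List YoungDiagram //
    List.Chain' YDCovers L ∧ L.head? = some ⊥ ∧ L.getLast? = some μ}

/-!
Write `S(λ) = ∑_{λ ⋖ Λ} w(λ, Λ) dim Λ`, where `w(κ, Λ) = (c + u)(c + v)` for the content `c` of
the cell `Λ ∖ κ`, and induct on `|λ| = n`. Expanding `dim Λ = ∑_{κ ⋖ Λ} dim κ`, the term `κ = λ`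
gives `dim λ · ∑_{λ ⋖ Λ} w(λ, Λ)`; the other terms are re-indexed through the diamond of the
distributive lattice of Young diagrams as `∑_{κ ⋖ λ} (S(κ) - w(κ, λ) dim λ)`. By induction
`S(κ) = (n - 1 + uv) n dim κ`, and `∑_{κ ⋖ λ} dim κ = dim λ`; what is left is the difference of
the weights of the addable and of the removable cells of `λ`, which telescopes along the rows to
`uv + 2n`.
-/

open Finset

theorem IsLowerSet.insert_of_forall_lt {α : Type*} [PartialOrder α] {s : Set α} {a : α}
    (hs : IsLowerSet s) (h : ∀ b < a, b ∈ s) : IsLowerSet (insert a s) := by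
  rintro b c hcb (rfl | hb)
  · rcases hcb.lt_or_eq with hlt | rfl
    · exact Or.inr (h c hlt)
    · exact Or.inl rfl
  · exact Or.inr (hs hcb hb)

theorem IsLowerSet.diff_singleton_of_forall_not_lt {α : Type*} [PartialOrder α] {s : Set α}
    {a : α} (hs : IsLowerSet s) (h : ∀ b ∈ s, ¬a < b) : IsLowerSet (s \ {a}) := by
  rintro b c hcb ⟨hb, hba⟩
  refine ⟨hs hcb hb, ?_⟩
  rintro rfl
  exact h b hb (hcb.lt_of_ne (Ne.symm hba))

/-- The last term makes the identity hold for every `M`, so that it goes by induction; it vanishes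
once `r M = 0`. -/
theorem sum_addable_sub_sum_removable {R : Type*} [CommRing R] (u v : R) {r : ℕ → ℕ}
    (hr : Antitone r) (M : ℕ) :
    ∑ i ∈ (range (M + 1)).filter (fun i => i = 0 ∨ r i < r (i - 1)),
        ((r i : R) - i + u) * ((r i : R) - i + v) -
      ∑ i ∈ (range M).filter (fun i => r (i + 1) < r i),
        ((r i : R) - 1 - i + u) * ((r i : R) - 1 - i + v) =
      u * v + 2 * ∑ i ∈ range M, (r i : R) + r M * (r M + u + v - 2 * M) := by
  induction M with
  | zero =>
    simp only [zero_add, range_one, range_zero, filter_singleton, filter_empty, true_or, if_true,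
      sum_singleton, sum_empty, Nat.cast_zero]
    ring
  | succ M ih =>
    simp only [sum_filter, sum_range_succ] at ih ⊢
    by_cases h : r (M + 1) < r M
    · simp only [h, Nat.add_sub_cancel, or_true, if_true]
      push_cast
      linear_combination ih
    · have heq : r (M + 1) = r M := le_antisymm (hr M.le_succ) (not_lt.1 h)
      simp only [Nat.add_sub_cancel, Nat.succ_ne_zero, false_or, heq, lt_self_iff_false, if_false]
      push_cast
      linear_combination ih

namespace YoungDiagram

variable {μ κ Λ : YoungDiagram} {i j : ℕ} {R : Type*} [CommRing R]

instance : DecidableEq YoungDiagram := fun _ _ => decidable_of_iff _ YoungDiagram.ext_iff.symm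

instance : WellFoundedLT YoungDiagram :=
  StrictMono.wellFoundedLT (f := cells) fun _ _ => cells_ssubset_iff.mpr

theorem ydCovers_iff_covBy {μ ν : YoungDiagram} : YDCovers μ ν ↔ μ ⋖ ν := by
  constructor
  · rintro ⟨c, hc, hν⟩
    have hcov : μ.cells ⋖ ν.cells := Finset.covBy_iff_exists_insert.2 ⟨c, hc, hν.symm⟩
    exact ⟨cells_ssubset_iff.1 hcov.lt,
      fun _ h₁ h₂ => hcov.2 (cells_ssubset_iff.2 h₁) (cells_ssubset_iff.2 h₂)⟩
  · intro h
    -- a maximal cell of `ν ∖ μ` is maximal in `ν`; removing it leaves a diagram between `μ` and `ν`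
    obtain ⟨c, hc⟩ :=
      exists_maximal (sdiff_nonempty.2 fun hle => h.lt.not_ge (cells_subset_iff.1 hle))
    obtain ⟨hcν, hcμ⟩ := mem_sdiff.1 hc.prop
    have hmax : ∀ d ∈ (ν.cells : Set (ℕ × ℕ)), ¬c < d := fun d hd hcd =>
      hcd.not_ge (hc.2 (mem_sdiff.2 ⟨hd, fun hdμ => hcμ (μ.isLowerSet hcd.le hdμ)⟩) hcd.le)
    let ρ : YoungDiagram :=
      ⟨ν.cells.erase c, by rw [coe_erase]; exact ν.isLowerSet.diff_singleton_of_forall_not_lt hmax⟩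
    have hμρ : μ ≤ ρ := fun x hx => mem_erase.2 ⟨ne_of_mem_of_not_mem hx hcμ, h.le hx⟩
    have hρν : ρ ≤ ν := fun x hx => (mem_erase.1 hx).2
    obtain rfl : ρ = μ := (h.eq_or_eq hμρ hρν).resolve_right fun hρ =>
      notMem_erase c ν.cells (hρ ▸ hcν : c ∈ ρ)
    exact ⟨c, hcμ, (insert_erase hcν).symm⟩

theorem card_eq_of_covBy (h : κ ⋖ μ) : μ.card = κ.card + 1 := by
  obtain ⟨c, hc, hμ⟩ := ydCovers_iff_covBy.2 h
  rw [YoungDiagram.card, hμ, card_insert_of_notMem hc]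

theorem cells_sup_sdiff_left (μ ν : YoungDiagram) :
    (μ ⊔ ν).cells \ μ.cells = ν.cells \ (μ ⊓ ν).cells := by
  rw [cells_sup, cells_inf, union_sdiff_left, sdiff_inter_self_right]

theorem rowLen_pos_iff : 0 < μ.rowLen i ↔ i < μ.colLen 0 := by
  rw [← mem_iff_lt_rowLen, mem_iff_lt_colLen]

theorem rowLen_colLen_zero (μ : YoungDiagram) : μ.rowLen (μ.colLen 0) = 0 :=
  Nat.eq_zero_of_not_pos (rowLen_pos_iff.not.2 (lt_irrefl _))

theorem colLen_zero_pos (hμ : μ ≠ ⊥) : 0 < μ.colLen 0 := by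
  obtain ⟨⟨a, b⟩, hab⟩ : μ.cells.Nonempty :=
    nonempty_iff_ne_empty.2 fun h => hμ (YoungDiagram.ext (h.trans cells_bot.symm))
  exact mem_iff_lt_colLen.1 (μ.up_left_mem (Nat.zero_le a) (Nat.zero_le b) hab)

theorem card_eq_sum_rowLen (μ : YoungDiagram) :
    μ.card = ∑ i ∈ range (μ.colLen 0), μ.rowLen i := by
  rw [YoungDiagram.card, card_eq_sum_card_fiberwise (f := Prod.fst) (t := range (μ.colLen 0))]
  · simp_rw [rowLen_eq_card]
    rfl
  · rintro ⟨a, b⟩ hab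
    exact mem_range.2 (mem_iff_lt_colLen.1 (μ.up_left_mem le_rfl (Nat.zero_le b) hab))

theorem forall_lt_mem_iff_of_notMem (hij : (i, j) ∉ μ) :
    (∀ d < (i, j), d ∈ μ) ↔ j = μ.rowLen i ∧ (i = 0 ∨ μ.rowLen i < μ.rowLen (i - 1)) := by
  rw [mem_iff_lt_rowLen, not_lt] at hij
  constructor
  · intro h
    have hj : j = 0 ∨ j - 1 < μ.rowLen i := by
      rcases Nat.eq_zero_or_pos j with hj | hj
      · exact Or.inl hj
      · exact Or.inr (mem_iff_lt_rowLen.1 (h _ (Prod.mk_lt_mk_of_le_of_lt le_rfl (by omega))))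
    refine ⟨by omega, ?_⟩
    rcases Nat.eq_zero_or_pos i with hi | hi
    · exact Or.inl hi
    · have := mem_iff_lt_rowLen.1 (h _ (Prod.mk_lt_mk_of_lt_of_le (Nat.sub_lt hi one_pos) le_rfl))
      omega
  · rintro ⟨rfl, hi⟩ ⟨a, b⟩ hab
    rw [mem_iff_lt_rowLen]
    have h₁ := μ.rowLen_anti a i hab.le.1
    have h₂ : a < i → μ.rowLen (i - 1) ≤ μ.rowLen a := fun h => μ.rowLen_anti _ _ (by omega)
    rcases Prod.mk_lt_mk.1 hab with ⟨ha, hb⟩ | ⟨ha, hb⟩ <;> omega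

theorem forall_not_lt_iff_of_mem (hij : (i, j) ∈ μ) :
    (∀ d ∈ μ, ¬(i, j) < d) ↔ j + 1 = μ.rowLen i ∧ μ.rowLen (i + 1) < μ.rowLen i := by
  rw [mem_iff_lt_rowLen] at hij
  constructor
  · intro h
    have h₁ : ¬j + 1 < μ.rowLen i := fun hlt =>
      h _ (mem_iff_lt_rowLen.2 hlt) (Prod.mk_lt_mk_of_le_of_lt le_rfl j.lt_succ_self)
    have h₂ : ¬j < μ.rowLen (i + 1) := fun hlt =>
      h _ (mem_iff_lt_rowLen.2 hlt) (Prod.mk_lt_mk_of_lt_of_le i.lt_succ_self le_rfl)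
    omega
  · rintro ⟨hj, hi⟩ ⟨a, b⟩ hab hlt
    rw [mem_iff_lt_rowLen] at hab
    have h₁ := μ.rowLen_anti i a hlt.le.1
    have h₂ : i < a → μ.rowLen a ≤ μ.rowLen (i + 1) := fun h => μ.rowLen_anti _ _ h
    rcases Prod.mk_lt_mk.1 hlt with ⟨ha, hb⟩ | ⟨ha, hb⟩ <;> omega

theorem notMem_rowLen (μ : YoungDiagram) (i : ℕ) : (i, μ.rowLen i) ∉ μ := by
  simp [mem_iff_lt_rowLen]

def addableRows (μ : YoungDiagram) : Finset ℕ :=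
  (range (μ.colLen 0 + 1)).filter fun i => i = 0 ∨ μ.rowLen i < μ.rowLen (i - 1)

def removableRows (μ : YoungDiagram) : Finset ℕ :=
  (range (μ.colLen 0)).filter fun i => μ.rowLen (i + 1) < μ.rowLen i

theorem mem_addableRows : i ∈ μ.addableRows ↔ i = 0 ∨ μ.rowLen i < μ.rowLen (i - 1) := by
  simp only [addableRows, mem_filter, mem_range, and_iff_right_iff_imp]
  rintro (rfl | h)
  · omega
  · have := rowLen_pos_iff.1 (Nat.zero_lt_of_lt h)
    omega

theorem mem_removableRows : i ∈ μ.removableRows ↔ μ.rowLen (i + 1) < μ.rowLen i := by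
  simp only [removableRows, mem_filter, mem_range, and_iff_right_iff_imp]
  exact fun h => rowLen_pos_iff.1 (Nat.zero_lt_of_lt h)

theorem mk_rowLen_sub_one_mem (h : i ∈ μ.removableRows) : (i, μ.rowLen i - 1) ∈ μ := by
  rw [mem_iff_lt_rowLen]
  have := mem_removableRows.1 h
  omega

/-- Junk value `μ` on rows where no cell can be added. -/
def addCell (μ : YoungDiagram) (i : ℕ) : YoungDiagram :=
  if h : i ∈ μ.addableRows then
    ⟨insert (i, μ.rowLen i) μ.cells, by
      rw [coe_insert]
      exact μ.isLowerSet.insert_of_forall_lt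
        ((forall_lt_mem_iff_of_notMem (μ.notMem_rowLen i)).2 ⟨rfl, mem_addableRows.1 h⟩)⟩
  else μ

/-- Junk value `μ` on rows where no cell can be removed. -/
def removeCell (μ : YoungDiagram) (i : ℕ) : YoungDiagram :=
  if h : i ∈ μ.removableRows then
    ⟨μ.cells.erase (i, μ.rowLen i - 1), by
      rw [coe_erase]
      have := mem_removableRows.1 h
      exact μ.isLowerSet.diff_singleton_of_forall_not_lt
        ((forall_not_lt_iff_of_mem (mk_rowLen_sub_one_mem h)).2 ⟨by omega, this⟩)⟩
  else μ

theorem cells_addCell (h : i ∈ μ.addableRows) :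
    (μ.addCell i).cells = insert (i, μ.rowLen i) μ.cells := by
  rw [addCell, dif_pos h]

theorem cells_removeCell (h : i ∈ μ.removableRows) :
    (μ.removeCell i).cells = μ.cells.erase (i, μ.rowLen i - 1) := by
  rw [removeCell, dif_pos h]

theorem cells_addCell_sdiff (h : i ∈ μ.addableRows) :
    (μ.addCell i).cells \ μ.cells = {(i, μ.rowLen i)} := by
  rw [cells_addCell h, insert_sdiff_cancel (μ.notMem_rowLen i)]

theorem cells_sdiff_removeCell (h : i ∈ μ.removableRows) :
    μ.cells \ (μ.removeCell i).cells = {(i, μ.rowLen i - 1)} := by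
  rw [cells_removeCell h, sdiff_erase_self (mk_rowLen_sub_one_mem h)]

theorem covBy_addCell (h : i ∈ μ.addableRows) : μ ⋖ μ.addCell i :=
  ydCovers_iff_covBy.1 ⟨_, μ.notMem_rowLen i, cells_addCell h⟩

theorem removeCell_covBy (h : i ∈ μ.removableRows) : μ.removeCell i ⋖ μ := by
  refine ydCovers_iff_covBy.1 ⟨(i, μ.rowLen i - 1), ?_, ?_⟩ <;> rw [cells_removeCell h]
  · exact notMem_erase _ _
  · exact (insert_erase (mk_rowLen_sub_one_mem h)).symm

theorem exists_eq_addCell_of_covBy (h : μ ⋖ Λ) : ∃ i ∈ μ.addableRows, Λ = μ.addCell i := by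
  obtain ⟨⟨i, j⟩, hij, hΛ⟩ := ydCovers_iff_covBy.2 h
  have hlt : ∀ d < (i, j), d ∈ μ := fun d hd => by
    have : d ∈ Λ.cells := Λ.isLowerSet hd.le (by rw [mem_coe, hΛ]; exact mem_insert_self _ _)
    rw [hΛ, mem_insert] at this
    exact this.resolve_left hd.ne
  obtain ⟨rfl, hi⟩ := (forall_lt_mem_iff_of_notMem hij).1 hlt
  rw [← mem_addableRows] at hi
  exact ⟨i, hi, YoungDiagram.ext (by rw [hΛ, cells_addCell hi])⟩

theorem exists_eq_removeCell_of_covBy (h : κ ⋖ μ) : ∃ i ∈ μ.removableRows, κ = μ.removeCell i := by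
  obtain ⟨⟨i, j⟩, hij, hμ⟩ := ydCovers_iff_covBy.2 h
  have hmem : (i, j) ∈ μ := by rw [← mem_cells, hμ]; exact mem_insert_self _ _
  have hmax : ∀ d ∈ μ, ¬(i, j) < d := fun d hd hlt => by
    rw [← mem_cells, hμ, mem_insert] at hd
    exact hij (κ.isLowerSet hlt.le (hd.resolve_left hlt.ne'))
  obtain ⟨hj, hi⟩ := (forall_not_lt_iff_of_mem hmem).1 hmax
  obtain rfl : j = μ.rowLen i - 1 := by omega
  rw [← mem_removableRows] at hi
  exact ⟨i, hi, YoungDiagram.ext (by rw [cells_removeCell hi, hμ, erase_insert hij])⟩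

theorem addCell_injOn : Set.InjOn μ.addCell μ.addableRows := fun i hi i' hi' h => by
  have := cells_addCell_sdiff hi
  rw [h, cells_addCell_sdiff hi', singleton_inj] at this
  exact (congrArg Prod.fst this).symm

theorem removeCell_injOn : Set.InjOn μ.removeCell μ.removableRows := fun i hi i' hi' h => by
  have := cells_sdiff_removeCell hi
  rw [h, cells_sdiff_removeCell hi', singleton_inj] at this
  exact (congrArg Prod.fst this).symm

def upCovers (μ : YoungDiagram) : Finset YoungDiagram :=
  μ.addableRows.image μ.addCell

def downCovers (μ : YoungDiagram) : Finset YoungDiagram :=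
  μ.removableRows.image μ.removeCell

theorem mem_upCovers : Λ ∈ μ.upCovers ↔ μ ⋖ Λ := by
  simp only [upCovers, mem_image]
  constructor
  · rintro ⟨i, hi, rfl⟩
    exact covBy_addCell hi
  · intro h
    obtain ⟨i, hi, rfl⟩ := exists_eq_addCell_of_covBy h
    exact ⟨i, hi, rfl⟩

theorem mem_downCovers : κ ∈ μ.downCovers ↔ κ ⋖ μ := by
  simp only [downCovers, mem_image]
  constructor
  · rintro ⟨i, hi, rfl⟩
    exact removeCell_covBy hi
  · intro h
    obtain ⟨i, hi, rfl⟩ := exists_eq_removeCell_of_covBy h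
    exact ⟨i, hi, rfl⟩

theorem sum_upCovers {M : Type*} [AddCommMonoid M] (f : YoungDiagram → M) :
    ∑ Λ ∈ μ.upCovers, f Λ = ∑ i ∈ μ.addableRows, f (μ.addCell i) :=
  sum_image addCell_injOn

theorem sum_downCovers {M : Type*} [AddCommMonoid M] (f : YoungDiagram → M) :
    ∑ κ ∈ μ.downCovers, f κ = ∑ i ∈ μ.removableRows, f (μ.removeCell i) :=
  sum_image removeCell_injOn

theorem downCovers_nonempty (hμ : μ ≠ ⊥) : μ.downCovers.Nonempty := by
  have hpos := colLen_zero_pos hμ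
  have hlast : μ.colLen 0 - 1 ∈ μ.removableRows := by
    have := rowLen_pos_iff.2 (Nat.sub_lt hpos one_pos)
    rw [mem_removableRows, Nat.sub_add_cancel hpos, rowLen_colLen_zero]
    exact this
  exact ⟨_, mem_downCovers.2 (removeCell_covBy hlast)⟩

def contentWeight (u v : R) (κ Λ : YoungDiagram) : R :=
  ∑ b ∈ Λ.cells \ κ.cells, ((b.2 : R) - b.1 + u) * ((b.2 : R) - b.1 + v)

theorem contentWeight_addCell (u v : R) (h : i ∈ μ.addableRows) :
    contentWeight u v μ (μ.addCell i) =
      ((μ.rowLen i : R) - i + u) * ((μ.rowLen i : R) - i + v) := by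
  rw [contentWeight, cells_addCell_sdiff h, sum_singleton]

theorem contentWeight_removeCell (u v : R) (h : i ∈ μ.removableRows) :
    contentWeight u v (μ.removeCell i) μ =
      ((μ.rowLen i : R) - 1 - i + u) * ((μ.rowLen i : R) - 1 - i + v) := by
  rw [contentWeight, cells_sdiff_removeCell h, sum_singleton,
    Nat.cast_pred (Nat.zero_lt_of_lt (mem_removableRows.1 h))]

theorem sum_upCovers_sub_sum_downCovers (u v : R) (μ : YoungDiagram) :
    ∑ Λ ∈ μ.upCovers, contentWeight u v μ Λ - ∑ κ ∈ μ.downCovers, contentWeight u v κ μ =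
      u * v + 2 * μ.card := by
  rw [sum_upCovers, sum_downCovers, sum_congr rfl fun i hi => contentWeight_addCell u v hi,
    sum_congr rfl fun i hi => contentWeight_removeCell u v hi, addableRows, removableRows,
    sum_addable_sub_sum_removable u v (fun _ _ h => μ.rowLen_anti _ _ h), rowLen_colLen_zero,
    card_eq_sum_rowLen]
  push_cast
  ring

def chains (μ : YoungDiagram) : Set (List YoungDiagram) :=
  {L | L.IsChain YDCovers ∧ L.head? = some ⊥ ∧ L.getLast? = some μ}

theorem dimYD_eq_card_chains (μ : YoungDiagram) : dimYD μ = Nat.card (chains μ) := rfl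

theorem mem_chains_iff {L : List YoungDiagram} :
    L ∈ chains μ ↔ (μ = ⊥ ∧ L = [⊥]) ∨ ∃ κ, κ ⋖ μ ∧ ∃ L' ∈ chains κ, L = L' ++ [μ] := by
  constructor
  · rintro ⟨hc, hh, hl⟩
    obtain ⟨L', x, rfl⟩ := L.eq_nil_or_concat'.resolve_left (by rintro rfl; simp at hh)
    obtain rfl : x = μ := by simpa using hl
    rcases eq_or_ne L' [] with rfl | hL'
    · exact Or.inl (by simpa using hh)
    rw [List.isChain_append, List.getLast?_eq_getLast_of_ne_nil hL'] at hc
    refine Or.inr ⟨L'.getLast hL', ydCovers_iff_covBy.1 (hc.2.2 _ rfl _ rfl), L',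
      ⟨hc.1, ?_, List.getLast?_eq_getLast_of_ne_nil hL'⟩, rfl⟩
    rwa [List.head?_append_of_ne_nil _ hL'] at hh
  · rintro (⟨rfl, rfl⟩ | ⟨κ, hκ, L', ⟨hc, hh, hl⟩, rfl⟩)
    · exact ⟨List.isChain_singleton _, rfl, rfl⟩
    have hL' : L' ≠ [] := by rintro rfl; simp at hh
    refine ⟨List.isChain_append.2 ⟨hc, List.isChain_singleton _, ?_⟩, ?_, by simp⟩
    · rw [hl]
      simpa using ydCovers_iff_covBy.2 hκ
    · rwa [List.head?_append_of_ne_nil _ hL']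

theorem chains_bot : chains ⊥ = {[⊥]} := by
  ext L
  rw [mem_chains_iff, Set.mem_singleton_iff]
  constructor
  · rintro (⟨-, rfl⟩ | ⟨κ, hκ, -⟩)
    · rfl
    · exact absurd hκ.lt not_lt_bot
  · rintro rfl
    exact Or.inl ⟨rfl, rfl⟩

def appendChain (μ : YoungDiagram) (x : Σ κ : μ.downCovers, chains κ) : chains μ :=
  ⟨x.2.1 ++ [μ], mem_chains_iff.2 (Or.inr ⟨x.1, mem_downCovers.1 x.1.2, x.2.1, x.2.2, rfl⟩)⟩

theorem appendChain_bijective (hμ : μ ≠ ⊥) : Function.Bijective (appendChain μ) := by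
  constructor
  · rintro ⟨⟨κ₁, h₁⟩, L₁, hL₁⟩ ⟨⟨κ₂, h₂⟩, L₂, hL₂⟩ h
    obtain rfl : L₁ = L₂ := List.append_cancel_right (congrArg Subtype.val h)
    obtain rfl : κ₁ = κ₂ := Option.some_injective _ (hL₁.2.2.symm.trans hL₂.2.2)
    rfl
  · rintro ⟨L, hL⟩
    obtain ⟨rfl, -⟩ | ⟨κ, hκ, L', hL', rfl⟩ := mem_chains_iff.1 hL
    · exact absurd rfl hμ
    · exact ⟨⟨⟨κ, mem_downCovers.2 hκ⟩, L', hL'⟩, rfl⟩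

theorem finite_chains (μ : YoungDiagram) : (chains μ).Finite := by
  induction μ using WellFoundedLT.induction with
  | _ μ ih =>
    rcases eq_or_ne μ ⊥ with rfl | hμ
    · rw [chains_bot]
      exact Set.finite_singleton _
    · have (κ : μ.downCovers) : Finite (chains κ) := (ih κ (mem_downCovers.1 κ.2).lt).to_subtype
      exact Set.finite_coe_iff.1 (Finite.of_surjective _ (appendChain_bijective hμ).2)

theorem dimYD_eq_sum_downCovers (hμ : μ ≠ ⊥) : dimYD μ = ∑ κ ∈ μ.downCovers, dimYD κ := by
  have (κ : μ.downCovers) : Finite (chains κ) := (finite_chains κ).to_subtype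
  rw [dimYD_eq_card_chains, ← Nat.card_congr (Equiv.ofBijective _ (appendChain_bijective hμ)),
    Nat.card_sigma, ← sum_coe_sort μ.downCovers]
  rfl

theorem dimYD_pos (μ : YoungDiagram) : 0 < dimYD μ := by
  induction μ using WellFoundedLT.induction with
  | _ μ ih =>
    rcases eq_or_ne μ ⊥ with rfl | hμ
    · simp [dimYD_eq_card_chains, chains_bot]
    · rw [dimYD_eq_sum_downCovers hμ]
      exact sum_pos (fun κ hκ => ih κ (mem_downCovers.1 hκ).lt) (downCovers_nonempty hμ)

/-- The diamond `(Λ, κ) ↦ (μ ⊓ κ, κ)`, with inverse `(κ, ν) ↦ (μ ⊔ ν, ν)`, matches the two kinds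
of paths, and `Λ ∖ μ = ν ∖ κ` along it. -/
theorem sum_upCovers_sum_erase_downCovers {M : Type*} [AddCommMonoid M] (μ : YoungDiagram)
    (F : Finset (ℕ × ℕ) → YoungDiagram → M) :
    ∑ Λ ∈ μ.upCovers, ∑ κ ∈ Λ.downCovers.erase μ, F (Λ.cells \ μ.cells) κ =
      ∑ κ ∈ μ.downCovers, ∑ ν ∈ κ.upCovers.erase μ, F (ν.cells \ κ.cells) ν := by
  rw [sum_sigma', sum_sigma']
  refine sum_nbij' (fun x => ⟨μ ⊓ x.2, x.2⟩) (fun y => ⟨μ ⊔ y.2, y.2⟩) ?_ ?_ ?_ ?_ ?_ <;>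
    rintro ⟨ρ, σ⟩ h <;>
    simp only [mem_sigma, mem_erase, mem_upCovers, mem_downCovers] at h ⊢ <;>
    obtain ⟨hρ, hne, hσ⟩ := h
  · obtain rfl := hρ.wcovBy.sup_eq hσ.wcovBy hne.symm
    exact ⟨inf_covBy_of_covBy_sup_right hσ, hne, inf_covBy_of_covBy_sup_left hρ⟩
  · obtain rfl := hρ.wcovBy.inf_eq hσ.wcovBy hne.symm
    exact ⟨covBy_sup_of_inf_covBy_right hσ, hne, covBy_sup_of_inf_covBy_left hρ⟩
  · rw [hρ.wcovBy.sup_eq hσ.wcovBy hne.symm]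
  · rw [hρ.wcovBy.inf_eq hσ.wcovBy hne.symm]
  · rw [← hρ.wcovBy.sup_eq hσ.wcovBy hne.symm, cells_sup_sdiff_left]

theorem sum_upCovers_contentWeight_mul_dimYD (u v : R) (μ : YoungDiagram) :
    ∑ Λ ∈ μ.upCovers, contentWeight u v μ Λ * dimYD Λ =
      (μ.card + u * v) * (μ.card + 1) * dimYD μ := by
  induction μ using WellFoundedLT.induction with
  | _ μ ih =>
    have hdim_up (Λ) (hΛ : Λ ∈ μ.upCovers) :
        (dimYD Λ : R) = dimYD μ + ∑ κ ∈ Λ.downCovers.erase μ, (dimYD κ : R) := by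
      have hcov := mem_upCovers.1 hΛ
      rw [dimYD_eq_sum_downCovers hcov.lt.ne_bot, Nat.cast_sum,
        ← add_sum_erase _ _ (mem_downCovers.2 hcov)]
    have hsum_down (κ) (hκ : κ ∈ μ.downCovers) :
        ∑ ν ∈ κ.upCovers.erase μ, contentWeight u v κ ν * dimYD ν =
          (μ.card - 1 + u * v) * μ.card * dimYD κ - contentWeight u v κ μ * dimYD μ := by
      have hcov := mem_downCovers.1 hκ
      rw [sum_erase_eq_sub (mem_upCovers.2 hcov), ih κ hcov.lt, card_eq_of_covBy hcov]
      push_cast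
      ring
    have hdim : (μ.card : R) * ∑ κ ∈ μ.downCovers, (dimYD κ : R) = μ.card * dimYD μ := by
      rcases eq_or_ne μ ⊥ with rfl | hμ
      · simp [YoungDiagram.card]
      · rw [dimYD_eq_sum_downCovers hμ, Nat.cast_sum]
    calc ∑ Λ ∈ μ.upCovers, contentWeight u v μ Λ * dimYD Λ
        = (∑ Λ ∈ μ.upCovers, contentWeight u v μ Λ) * dimYD μ +
            ∑ Λ ∈ μ.upCovers, ∑ κ ∈ Λ.downCovers.erase μ, contentWeight u v μ Λ * dimYD κ := by
          rw [sum_mul, ← sum_add_distrib]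
          exact sum_congr rfl fun Λ hΛ => by rw [hdim_up Λ hΛ, mul_add, mul_sum]
      _ = (∑ Λ ∈ μ.upCovers, contentWeight u v μ Λ) * dimYD μ +
            ∑ κ ∈ μ.downCovers, ∑ ν ∈ κ.upCovers.erase μ, contentWeight u v κ ν * dimYD ν := by
          congr 1
          exact sum_upCovers_sum_erase_downCovers μ
            fun s κ => (∑ b ∈ s, ((b.2 : R) - b.1 + u) * ((b.2 : R) - b.1 + v)) * dimYD κ
      _ = (∑ Λ ∈ μ.upCovers, contentWeight u v μ Λ - ∑ κ ∈ μ.downCovers, contentWeight u v κ μ) *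
            dimYD μ + (μ.card - 1 + u * v) * (μ.card * ∑ κ ∈ μ.downCovers, (dimYD κ : R)) := by
          rw [sum_congr rfl hsum_down, sum_sub_distrib, ← sum_mul, mul_sum, mul_sum]
          ring_nf
      _ = _ := by
          rw [sum_upCovers_sub_sum_downCovers, hdim]
          ring

end YoungDiagram

/-- For a Young diagram `λ` with `n = |λ|` boxes and arbitrary `u, v ∈ ℂ`:
`∑_{Λ : λ ↗ Λ} (c(b) + u)(c(b) + v) dim Λ = (n + uv)(n + 1) dim λ`, where `b = Λ ∖ λ` and
`c(b) = j − i` is the content of the added box; equivalently (when the right-hand factor is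
nonzero), the numbers `p_{u,v}(λ,Λ) = (c(b)+u)(c(b)+v) dim Λ / ((n+uv)(n+1) dim λ)` sum to 1. -/
theorem z_measure_transition_sum (lam : YoungDiagram) (n : ℕ) (hn : n = lam.card) (u v : ℂ) :
    (∑ᶠ Λ ∈ {Λ : YoungDiagram | YDCovers lam Λ},
      (∑ b ∈ Λ.cells \ lam.cells, (((b.2 : ℂ) - (b.1 : ℂ)) + u) * (((b.2 : ℂ) - (b.1 : ℂ)) + v)) *
        (dimYD Λ : ℂ)
      = ((n : ℂ) + u * v) * ((n : ℂ) + 1) * (dimYD lam : ℂ)) ∧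
    ((n : ℂ) + u * v ≠ 0 →
      ∑ᶠ Λ ∈ {Λ : YoungDiagram | YDCovers lam Λ},
        (∑ b ∈ Λ.cells \ lam.cells,
            (((b.2 : ℂ) - (b.1 : ℂ)) + u) * (((b.2 : ℂ) - (b.1 : ℂ)) + v)) * (dimYD Λ : ℂ) /
          (((n : ℂ) + u * v) * ((n : ℂ) + 1) * (dimYD lam : ℂ)) = 1) := by
  subst hn
  have hcovers : {Λ | YDCovers lam Λ} = ↑lam.upCovers := by
    ext Λ
    exact YoungDiagram.ydCovers_iff_covBy.trans YoungDiagram.mem_upCovers.symm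
  have hsum := YoungDiagram.sum_upCovers_contentWeight_mul_dimYD u v lam
  have hdim : (dimYD lam : ℂ) ≠ 0 := Nat.cast_ne_zero.2 (YoungDiagram.dimYD_pos lam).ne'
  simp only [hcovers, finsum_mem_coe_finset, ← sum_div]
  refine ⟨hsum, fun h => (div_eq_one_iff_eq ?_).2 hsum⟩
  exact mul_ne_zero (mul_ne_zero h lam.card.cast_add_one_ne_zero) hdim
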